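/- Let C₁ and C₂ be two coverings of the same finite set U. Then Cov(C₁) = Cov(C₂) if and only if for every x ∈ U, N_{C₁}(x) = N_{C₂}(x). -/
import Mathlib


open Finset

variable {α : Type*} [Fintype α] [DecidableEq α]

/-- `C` is a covering of the (finite) universe: no empty block, blocks cover everything. -/
def IsCovering (C : Finset (Finset α)) : Prop :=
  ∅ ∉ C ∧ C.sup id = (Finset.univ : Finset α)

/-- Neighborhood of `x`: intersection of all blocks of `C` containing `x`. -/
def Nbhd (C : Finset (Finset α)) (x : α) : Finset α :=
  (C.filter fun K => x ∈ K).inf id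

/-- Repeat degree of `X` w.r.t. `C`. -/
def deg (C : Finset (Finset α)) (X : Finset α) : ℕ :=
  (C.filter fun K => X ⊆ K).card

/-- `I(F)`: all unions of subfamilies of `F`. -/
def IFam (F : Finset (Finset α)) : Finset (Finset α) :=
  F.powerset.image fun D => D.sup id

/-- Reducible elements of `F`. -/
def SFam (F : Finset (Finset α)) : Finset (Finset α) :=
  F.filter fun K => K ∈ IFam (F.erase K)

/-- Reduct of `C`. -/
def reduct (C : Finset (Finset α)) : Finset (Finset α) :=
  C \ SFam C

/-- Covering of neighborhoods induced by `C`. -/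
def Cov (C : Finset (Finset α)) : Finset (Finset α) :=
  Finset.univ.image (Nbhd C)

/-- `Γ(x)`. -/
def Gamma (C : Finset (Finset α)) (x : α) : Finset (Finset α) :=
  C.filter fun K => x ∈ K ∧ ∀ y ∈ K, deg C {x, y} = deg C {x}

/-- `P_C(x)`. -/
def PMap (C : Finset (Finset α)) (x : α) : Finset α :=
  Finset.univ.filter fun y => deg C {x, y} = deg C {x}

/-- Relation induced by a covering. -/
def RelOf (C : Finset (Finset α)) : Set (α × α) :=
  {p | p.2 ∈ Nbhd C p.1}

lemma mem_Nbhd_iff (C : Finset (Finset α)) (x y : α) :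
    y ∈ Nbhd C x ↔ ∀ K ∈ C, x ∈ K → y ∈ K := by
  unfold Nbhd
  skip
  constructor
  · intro h K hK hx
    exact (Finset.inf_le (by simp [hK, hx]) : (C.filter fun K => x ∈ K).inf id ≤ id K) h
  · intro h
    have : ({y} : Finset α) ≤ (C.filter fun K => x ∈ K).inf id := by
      apply Finset.le_inf
      intro K hK
      simp only [Finset.mem_filter] at hK
      simpa [id] using h K hK.1 hK.2
    simpa using this (Finset.mem_singleton_self y)

lemma mem_Nbhd_self (C : Finset (Finset α)) (x : α) : x ∈ Nbhd C x := by
  rw [mem_Nbhd_iff]; intro K _ hx; exact hx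

lemma Nbhd_subset (C : Finset (Finset α)) {x y : α} (h : x ∈ Nbhd C y) :
    Nbhd C x ⊆ Nbhd C y := by
  intro z hz
  rw [mem_Nbhd_iff] at *
  intro K hK hy
  exact hz K hK (h K hK hy)

theorem stmt14 (C₁ C₂ : Finset (Finset α)) (h1 : IsCovering C₁) (h2 : IsCovering C₂) :
    Cov C₁ = Cov C₂ ↔ ∀ x : α, Nbhd C₁ x = Nbhd C₂ x := by
  constructor
  · intro h x
    have key : ∀ (A B : Finset (Finset α)), Cov A = Cov B → ∀ x, Nbhd B x ⊆ Nbhd A x := by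
      intro A B hAB x
      have : Nbhd A x ∈ Cov B := by rw [← hAB]; exact Finset.mem_image_of_mem _ (Finset.mem_univ x)
      obtain ⟨y, _, hy⟩ := Finset.mem_image.mp this
      have hx : x ∈ Nbhd B y := hy ▸ mem_Nbhd_self A x
      calc Nbhd B x ⊆ Nbhd B y := Nbhd_subset B hx
        _ = Nbhd A x := hy
    exact Finset.Subset.antisymm (key C₂ C₁ h.symm x) (key C₁ C₂ h x)
  · intro h
    unfold Cov
    congr 1
    ext x
    rw [h x]
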